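/- arXiv:2509.02971 — 6 statements merged into one kernel-verified Lean document; each statement's English description precedes it below -/
import Mathlib

section
/- Let $H$ be a real Hilbert space, $D \subseteq H$ a linear subspace, and $A : D \to H$ a linear map that is unbounded in the sense that $\sup\{\|Ax\| : x \in D, \|x\| = 1\} = \infty$. Let $p \le 0$, $q \ge 0$, $r > 0$, $s > 0$ be real numbers. If $B : H \to H$ is a bounded linear operator satisfying $B(r x + s A x) = p x + q A x$ for all $x \in D$, then the operator norm of $B$ satisfies $\|B\| \ge q/s$. -/
/-- If `A : D → H` is an unbounded linear operator defined on a subspace `D` of a real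
Hilbert space `H`, `p ≤ 0`, `q ≥ 0`, `r > 0`, `s > 0`, and `B` is a bounded linear operator
on `H` with `B (r x + s A x) = p x + q A x` for all `x ∈ D`, then `‖B‖ ≥ q / s`. -/
theorem stmt1 {H : Type*} [NormedAddCommGroup H] [InnerProductSpace ℝ H]
    [CompleteSpace H]
    (D : Submodule ℝ H) (A : D →ₗ[ℝ] H)
    (hA : ∀ M : ℝ, ∃ x : D, ‖(x : H)‖ = 1 ∧ M < ‖A x‖)
    (p q r s : ℝ) (hp : p ≤ 0) (hq : 0 ≤ q) (hr : 0 < r) (hs : 0 < s)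
    (B : H →L[ℝ] H)
    (hB : ∀ x : D, B (r • (x : H) + s • A x) = p • (x : H) + q • A x) :
    q / s ≤ ‖B‖ := by
  by_contra hcon
  push_neg at hcon
  have hBs : ‖B‖ * s < q := by
    have := (lt_div_iff₀ hs).mp hcon
    linarith
  have hqs : 0 < q - ‖B‖ * s := by linarith
  obtain ⟨x, hx1, hxM⟩ := hA ((‖B‖ * r + |p|) / (q - ‖B‖ * s))
  have key : ‖p • (x : H) + q • A x‖ ≤ ‖B‖ * (r + s * ‖A x‖) := by
    rw [← hB x]
    calc ‖B (r • (x : H) + s • A x)‖ ≤ ‖B‖ * ‖r • (x : H) + s • A x‖ := B.le_opNorm _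
    _ ≤ ‖B‖ * (r + s * ‖A x‖) := by
        apply mul_le_mul_of_nonneg_left _ (norm_nonneg B)
        calc ‖r • (x : H) + s • A x‖ ≤ ‖r • (x : H)‖ + ‖s • A x‖ := norm_add_le _ _
        _ = r + s * ‖A x‖ := by
            rw [norm_smul, norm_smul, hx1, Real.norm_eq_abs, Real.norm_eq_abs,
              abs_of_pos hr, abs_of_pos hs, mul_one]
  have key2 : q * ‖A x‖ ≤ ‖B‖ * (r + s * ‖A x‖) + |p| := by
    have h1 : q * ‖A x‖ = ‖q • A x‖ := by
      rw [norm_smul, Real.norm_eq_abs, abs_of_nonneg hq]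
    have h2 : ‖q • A x‖ ≤ ‖p • (x : H) + q • A x‖ + ‖p • (x : H)‖ := by
      have := norm_sub_le (p • (x : H) + q • A x) (p • (x : H))
      simpa using this
    have h3 : ‖p • (x : H)‖ = |p| := by
      rw [norm_smul, hx1, Real.norm_eq_abs, mul_one]
    rw [h1]
    calc ‖q • A x‖ ≤ ‖p • (x : H) + q • A x‖ + |p| := by rw [← h3]; exact h2
    _ ≤ ‖B‖ * (r + s * ‖A x‖) + |p| := by linarith
  have hbd : ‖A x‖ ≤ (‖B‖ * r + |p|) / (q - ‖B‖ * s) := by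
    rw [le_div_iff₀ hqs]
    nlinarith [norm_nonneg (A x)]
  linarith
end

section
/- Let $\nu$ be a probability measure on $\mathbb{R}^d$ supported in the closed ball of radius $R > 0$ centered at the origin, and define $F : \mathbb{R}^d \to \mathbb{R}^d$ by $F(x) = \dfrac{\int y\, e^{\langle y, x\rangle}\, \nu(\mathrm{d}y)}{\int e^{\langle y, x\rangle}\, \nu(\mathrm{d}y)}$. Then $F$ is globally Lipschitz with $\|F(x_1) - F(x_2)\| \le 4 R^2 \|x_1 - x_2\|$ for all $x_1, x_2 \in \mathbb{R}^d$. -/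
open MeasureTheory
open scoped RealInnerProductSpace

private lemma abs_exp_sub_exp (u v : ℝ) :
    |Real.exp u - Real.exp v| ≤ |u - v| * (Real.exp u + Real.exp v) := by
  have key : ∀ a b : ℝ, b ≤ a →
      Real.exp a - Real.exp b ≤ (a - b) * (Real.exp a + Real.exp b) := by
    intro a b h
    have h1 := Real.add_one_le_exp (b - a)
    have h4 : Real.exp (b - a) * Real.exp a = Real.exp b := by
      rw [← Real.exp_add]; ring_nf
    nlinarith [Real.exp_pos a, Real.exp_pos b]
  rcases le_total v u with h | h
  · rw [abs_of_nonneg (sub_nonneg.2 (Real.exp_le_exp.2 h)), abs_of_nonneg (sub_nonneg.2 h)]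
    exact key u v h
  · rw [abs_of_nonpos (sub_nonpos.2 (Real.exp_le_exp.2 h)), abs_of_nonpos (sub_nonpos.2 h)]
    have := key v u h
    nlinarith

private lemma int_aux {α V : Type*} [MeasurableSpace α] {μ : Measure α} [IsFiniteMeasure μ]
    [NormedAddCommGroup V] {f : α → V} (hm : AEStronglyMeasurable f μ) {C : ℝ}
    (hb : ∀ᵐ x ∂μ, ‖f x‖ ≤ C) : Integrable f μ :=
  Integrable.mono' (integrable_const C) hm hb

set_option maxHeartbeats 2000000 in
/-- Core Lipschitz estimate: for `ν` a probability measure on `ℝ^d` supported in the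
closed ball of radius `R > 0`, the tilted mean
`F(x) = ∫ y e^{⟪y,x⟫} dν / ∫ e^{⟪y,x⟫} dν` satisfies
`‖F(x₁) - F(x₂)‖ ≤ 4R² ‖x₁ - x₂‖` for all `x₁, x₂`. -/
theorem stmt11 {d : ℕ} (R : ℝ) (hR : 0 < R)
    (ν : Measure (EuclideanSpace ℝ (Fin d))) [IsProbabilityMeasure ν]
    (hsupp : ν (Metric.closedBall 0 R)ᶜ = 0)
    (F : EuclideanSpace ℝ (Fin d) → EuclideanSpace ℝ (Fin d))
    (hF : ∀ x, F x = (∫ y, Real.exp ⟪y, x⟫ ∂ν)⁻¹ • ∫ y, Real.exp ⟪y, x⟫ • y ∂ν) :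
    ∀ x1 x2 : EuclideanSpace ℝ (Fin d), ‖F x1 - F x2‖ ≤ 4 * R ^ 2 * ‖x1 - x2‖ := by
  intro x1 x2
  rw [hF x1, hF x2]
  -- support facts
  have hsupp' : ν {y : EuclideanSpace ℝ (Fin d) | ¬ ‖y‖ ≤ R} = 0 := by
    convert hsupp using 2
    ext y
    simp [Metric.mem_closedBall, dist_zero_right]
  have hae : ∀ᵐ y ∂ν, ‖y‖ ≤ R := by
    rw [ae_iff]; exact hsupp'
  set p : Measure (EuclideanSpace ℝ (Fin d) × EuclideanSpace ℝ (Fin d)) := ν.prod ν with hp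
  have haep : ∀ᵐ yz ∂p, ‖yz.1‖ ≤ R ∧ ‖yz.2‖ ≤ R := by
    have h1 : ∀ᵐ yz ∂p, ‖yz.1‖ ≤ R := by
      rw [ae_iff]
      have hs : {yz : EuclideanSpace ℝ (Fin d) × EuclideanSpace ℝ (Fin d) | ¬ ‖yz.1‖ ≤ R} = {y : EuclideanSpace ℝ (Fin d) | ¬ ‖y‖ ≤ R} ×ˢ Set.univ := by
        ext yz; simp [Set.mem_prod]
      rw [hs, hp, Measure.prod_prod, hsupp', zero_mul]
    have h2 : ∀ᵐ yz ∂p, ‖yz.2‖ ≤ R := by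
      rw [ae_iff]
      have hs : {yz : EuclideanSpace ℝ (Fin d) × EuclideanSpace ℝ (Fin d) | ¬ ‖yz.2‖ ≤ R} = Set.univ ×ˢ {y : EuclideanSpace ℝ (Fin d) | ¬ ‖y‖ ≤ R} := by
        ext yz; simp [Set.mem_prod]
      rw [hs, hp, Measure.prod_prod, hsupp', mul_zero]
    exact h1.and h2
  -- basic exponential bound
  have hexp : ∀ (x y : EuclideanSpace ℝ (Fin d)), ‖y‖ ≤ R → Real.exp ⟪y, x⟫ ≤ Real.exp (R * ‖x‖) := by
    intro x y hy
    rw [Real.exp_le_exp]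
    calc ⟪y, x⟫ ≤ ‖y‖ * ‖x‖ := real_inner_le_norm y x
    _ ≤ R * ‖x‖ := mul_le_mul_of_nonneg_right hy (norm_nonneg x)
  have hcont : ∀ x : EuclideanSpace ℝ (Fin d), Continuous fun y : EuclideanSpace ℝ (Fin d) => Real.exp ⟪y, x⟫ :=
    fun x => Real.continuous_exp.comp (continuous_id.inner continuous_const)
  -- integrability on ν
  have hZint : ∀ x : EuclideanSpace ℝ (Fin d), Integrable (fun y => Real.exp ⟪y, x⟫) ν := by
    intro x
    refine int_aux (hcont x).aestronglyMeasurable (C := Real.exp (R * ‖x‖)) ?_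
    filter_upwards [hae] with y hy
    rw [Real.norm_eq_abs, abs_of_pos (Real.exp_pos _)]
    exact hexp x y hy
  have hMint : ∀ x : EuclideanSpace ℝ (Fin d), Integrable (fun y => Real.exp ⟪y, x⟫ • y) ν := by
    intro x
    refine int_aux (((hcont x).smul continuous_id).aestronglyMeasurable)
      (C := Real.exp (R * ‖x‖) * R) ?_
    filter_upwards [hae] with y hy
    rw [norm_smul, Real.norm_eq_abs, abs_of_pos (Real.exp_pos _)]
    exact mul_le_mul (hexp x y hy) hy (norm_nonneg y) (Real.exp_pos _).le
  set Z1 := ∫ y, Real.exp ⟪y, x1⟫ ∂ν with hZ1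
  set Z2 := ∫ y, Real.exp ⟪y, x2⟫ ∂ν with hZ2
  set M1 := ∫ y, Real.exp ⟪y, x1⟫ • y ∂ν with hM1
  set M2 := ∫ y, Real.exp ⟪y, x2⟫ • y ∂ν with hM2
  have hZ1pos : 0 < Z1 := integral_exp_pos (hZint x1)
  have hZ2pos : 0 < Z2 := integral_exp_pos (hZint x2)
  -- the weights on the product space
  set w : EuclideanSpace ℝ (Fin d) × EuclideanSpace ℝ (Fin d) → ℝ := fun yz => Real.exp ⟪yz.1, x1⟫ * Real.exp ⟪yz.2, x2⟫ with hw_def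
  set w' : EuclideanSpace ℝ (Fin d) × EuclideanSpace ℝ (Fin d) → ℝ := fun yz => Real.exp ⟪yz.1, x2⟫ * Real.exp ⟪yz.2, x1⟫ with hw'_def
  have hcw : Continuous w :=
    ((hcont x1).comp continuous_fst).mul ((hcont x2).comp continuous_snd)
  have hcw' : Continuous w' :=
    ((hcont x2).comp continuous_fst).mul ((hcont x1).comp continuous_snd)
  set K : ℝ := Real.exp (R * ‖x1‖) * Real.exp (R * ‖x2‖) with hK
  have hwb : ∀ᵐ yz ∂p, ‖w yz‖ ≤ K := by
    filter_upwards [haep] with yz hyz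
    rw [Real.norm_eq_abs, abs_of_pos (by positivity)]
    exact mul_le_mul (hexp x1 _ hyz.1) (hexp x2 _ hyz.2) (Real.exp_pos _).le (Real.exp_pos _).le
  have hw'b : ∀ᵐ yz ∂p, ‖w' yz‖ ≤ K := by
    filter_upwards [haep] with yz hyz
    rw [Real.norm_eq_abs, abs_of_pos (by positivity), hK, mul_comm (Real.exp (R * ‖x1‖))]
    exact mul_le_mul (hexp x2 _ hyz.1) (hexp x1 _ hyz.2) (Real.exp_pos _).le (Real.exp_pos _).le
  have hwint : Integrable w p := int_aux hcw.aestronglyMeasurable hwb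
  have hw'int : Integrable w' p := int_aux hcw'.aestronglyMeasurable hw'b
  -- integrability of the vector-valued integrands
  have hvec : ∀ (u : EuclideanSpace ℝ (Fin d) × EuclideanSpace ℝ (Fin d) → ℝ), Continuous u → (∀ᵐ yz ∂p, ‖u yz‖ ≤ K) →
      (Integrable (fun yz => u yz • yz.1) p ∧ Integrable (fun yz => u yz • yz.2) p ∧
       Integrable (fun yz => u yz • (yz.1 - yz.2)) p) := by
    intro u hu hub
    refine ⟨int_aux (hu.smul continuous_fst).aestronglyMeasurable (C := K * R) ?_,
           int_aux (hu.smul continuous_snd).aestronglyMeasurable (C := K * R) ?_,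
           int_aux (hu.smul (continuous_fst.sub continuous_snd)).aestronglyMeasurable
             (C := K * (2 * R)) ?_⟩ <;>
    · filter_upwards [haep, hub] with yz hyz hub'
      rw [norm_smul]
      have hKnn : (0:ℝ) ≤ K := le_trans (norm_nonneg _) hub'
      refine mul_le_mul hub' ?_ (norm_nonneg _) hKnn
      first
        | exact hyz.1
        | exact hyz.2
        | exact (norm_sub_le _ _).trans (by linarith [hyz.1, hyz.2])
  obtain ⟨hw1, hw2, hwsub⟩ := hvec w hcw hwb
  obtain ⟨hw'1, hw'2, hw'sub⟩ := hvec w' hcw' hw'b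
  -- iterated integral identities
  have hB1 : ∫ yz, w yz • yz.1 ∂p = Z2 • M1 := by
    rw [hp, integral_prod _ hw1]
    have : ∀ y : EuclideanSpace ℝ (Fin d), (∫ z, w (y, z) • y ∂ν) = Z2 • (Real.exp ⟪y, x1⟫ • y) := by
      intro y
      simp_rw [hw_def, mul_comm (Real.exp ⟪y, x1⟫), mul_smul]
      rw [integral_smul_const]
    simp_rw [this]
    rw [integral_smul]
  have hB2 : ∫ yz, w' yz • yz.1 ∂p = Z1 • M2 := by
    rw [hp, integral_prod _ hw'1]
    have : ∀ y : EuclideanSpace ℝ (Fin d), (∫ z, w' (y, z) • y ∂ν) = Z1 • (Real.exp ⟪y, x2⟫ • y) := by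
      intro y
      simp_rw [hw'_def, mul_comm (Real.exp ⟪y, x2⟫), mul_smul]
      rw [integral_smul_const]
    simp_rw [this]
    rw [integral_smul]
  -- swap identities
  have hswap1 : ∫ yz, w' yz • yz.1 ∂p = ∫ yz, w yz • yz.2 ∂p := by
    rw [hp, ← integral_prod_swap (fun yz : EuclideanSpace ℝ (Fin d) × EuclideanSpace ℝ (Fin d) => w yz • yz.2)]
    congr 1
    ext yz
    simp [hw_def, hw'_def, mul_comm]
  have hswap2 : ∫ yz, w yz • yz.1 ∂p = ∫ yz, w' yz • yz.2 ∂p := by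
    rw [hp, ← integral_prod_swap (fun yz : EuclideanSpace ℝ (Fin d) × EuclideanSpace ℝ (Fin d) => w' yz • yz.2)]
    congr 1
    ext yz
    simp [hw_def, hw'_def, mul_comm]
  -- the difference as an integral
  have hD : Z2 • M1 - Z1 • M2 = ∫ yz, w yz • (yz.1 - yz.2) ∂p := by
    rw [← hB1, ← hB2, hswap1, ← integral_sub hw1 hw2]
    congr 1
    ext yz
    rw [smul_sub]
  have hD' : Z2 • M1 - Z1 • M2 = -∫ yz, w' yz • (yz.1 - yz.2) ∂p := by
    have h3 : ∫ yz, w' yz • (yz.1 - yz.2) ∂p = Z1 • M2 - Z2 • M1 := by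
      rw [← hB2, ← hB1, hswap2, ← integral_sub hw'1 hw'2]
      congr 1
      ext yz
      rw [smul_sub]
    rw [h3]
    abel
  -- scalar integrals
  have hIw : ∫ yz, w yz ∂p = Z1 * Z2 := by
    rw [hp, integral_prod _ hwint]
    simp_rw [hw_def, integral_const_mul]
    rw [integral_mul_const]
  have hIw' : ∫ yz, w' yz ∂p = Z1 * Z2 := by
    rw [hp, integral_prod _ hw'int]
    simp_rw [hw'_def, integral_const_mul]
    rw [integral_mul_const, mul_comm]
  -- norm estimate of 2•D
  have h2D : (2:ℝ) • (Z2 • M1 - Z1 • M2) = ∫ yz, (w yz - w' yz) • (yz.1 - yz.2) ∂p := by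
    have step : ∫ yz, (w yz - w' yz) • (yz.1 - yz.2) ∂p
        = (∫ yz, w yz • (yz.1 - yz.2) ∂p) - ∫ yz, w' yz • (yz.1 - yz.2) ∂p := by
      rw [← integral_sub hwsub hw'sub]
      congr 1
      ext yz
      rw [sub_smul]
    have h3 : ∫ yz, w' yz • (yz.1 - yz.2) ∂p = -(Z2 • M1 - Z1 • M2) := by
      rw [hD', neg_neg]
    rw [step, ← hD, h3, two_smul]
    abel
  have hbound : ‖∫ yz, (w yz - w' yz) • (yz.1 - yz.2) ∂p‖
      ≤ ∫ yz, (4 * R ^ 2 * ‖x1 - x2‖) * (w yz + w' yz) ∂p := by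
    refine norm_integral_le_of_norm_le ((hwint.add hw'int).const_mul _) ?_
    filter_upwards [haep] with yz hyz
    obtain ⟨hy, hz⟩ := hyz
    rw [norm_smul, Real.norm_eq_abs]
    have hsub : ‖yz.1 - yz.2‖ ≤ 2 * R := (norm_sub_le _ _).trans (by linarith)
    have hw_eq : w yz = Real.exp (⟪yz.1, x1⟫ + ⟪yz.2, x2⟫) := by
      rw [Real.exp_add]
    have hw'_eq : w' yz = Real.exp (⟪yz.1, x2⟫ + ⟪yz.2, x1⟫) := by
      rw [Real.exp_add]
    have habs := abs_exp_sub_exp (⟪yz.1, x1⟫ + ⟪yz.2, x2⟫) (⟪yz.1, x2⟫ + ⟪yz.2, x1⟫)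
    have hdiff : (⟪yz.1, x1⟫ + ⟪yz.2, x2⟫) - (⟪yz.1, x2⟫ + ⟪yz.2, x1⟫)
        = ⟪yz.1 - yz.2, x1 - x2⟫ := by
      rw [inner_sub_left, inner_sub_right, inner_sub_right]
      ring
    rw [hdiff, ← hw_eq, ← hw'_eq] at habs
    have hip : |⟪yz.1 - yz.2, x1 - x2⟫| ≤ (2 * R) * ‖x1 - x2‖ := by
      refine (abs_real_inner_le_norm _ _).trans ?_
      exact mul_le_mul_of_nonneg_right hsub (norm_nonneg _)
    have hwpos : 0 ≤ w yz + w' yz := by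
      rw [hw_eq, hw'_eq]
      positivity
    have h2Rpos : (0:ℝ) ≤ 2 * R := by linarith
    calc |w yz - w' yz| * ‖yz.1 - yz.2‖
        ≤ (|⟪yz.1 - yz.2, x1 - x2⟫| * (w yz + w' yz)) * (2 * R) := by
          exact mul_le_mul habs hsub (norm_nonneg _)
            (mul_nonneg (abs_nonneg _) hwpos)
      _ ≤ (((2 * R) * ‖x1 - x2‖) * (w yz + w' yz)) * (2 * R) :=
          mul_le_mul_of_nonneg_right (mul_le_mul_of_nonneg_right hip hwpos) h2Rpos
      _ = (4 * R ^ 2 * ‖x1 - x2‖) * (w yz + w' yz) := by ring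
  have hintsum : ∫ yz, (4 * R ^ 2 * ‖x1 - x2‖) * (w yz + w' yz) ∂p
      = (4 * R ^ 2 * ‖x1 - x2‖) * (2 * (Z1 * Z2)) := by
    rw [integral_const_mul, integral_add hwint hw'int, hIw, hIw']
    ring
  have hnD : ‖Z2 • M1 - Z1 • M2‖ ≤ 4 * R ^ 2 * ‖x1 - x2‖ * (Z1 * Z2) := by
    have h2n : ‖(2:ℝ) • (Z2 • M1 - Z1 • M2)‖ = 2 * ‖Z2 • M1 - Z1 • M2‖ := by
      rw [norm_smul, Real.norm_eq_abs]
      norm_num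
    have := hbound
    rw [← h2D, hintsum, h2n] at this
    linarith
  -- final assembly
  have hFd : Z1⁻¹ • M1 - Z2⁻¹ • M2 = (Z1 * Z2)⁻¹ • (Z2 • M1 - Z1 • M2) := by
    rw [smul_sub, smul_smul, smul_smul]
    congr 1
    · congr 1
      field_simp
    · congr 1
      field_simp
  rw [hFd, norm_smul, Real.norm_eq_abs, abs_of_pos (by positivity)]
  calc (Z1 * Z2)⁻¹ * ‖Z2 • M1 - Z1 • M2‖
      ≤ (Z1 * Z2)⁻¹ * (4 * R ^ 2 * ‖x1 - x2‖ * (Z1 * Z2)) := by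
        exact mul_le_mul_of_nonneg_left hnD (by positivity)
    _ = 4 * R ^ 2 * ‖x1 - x2‖ := by
        field_simp
end

section
/- Let $c_0 > c_1 > 0$ and set $r = c_1/c_0 \in (0,1)$. Define for $t \in (0,1)$: $\alpha_t = \sqrt{\dfrac{r^t - r}{1 - r}}$ and $\beta_t = \sqrt{\dfrac{1 - r^t}{1 - r}}$. Then $\alpha_t$ and $\beta_t$ are differentiable in $t$ on $(0,1)$, and for all $t \in (0,1)$: $\dfrac{\dot\alpha_t \alpha_t c_0 + \dot\beta_t \beta_t c_1}{\alpha_t^2 c_0 + \beta_t^2 c_1} = \dfrac{1}{2} \log\dfrac{c_1}{c_0}$. -/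
/-- For the designed schedule `α_t = sqrt((r^t - r)/(1-r))`, `β_t = sqrt((1-r^t)/(1-r))`
with `r = c₁/c₀ ∈ (0,1)`, both are differentiable on `(0,1)` and
`(α̇_t α_t c₀ + β̇_t β_t c₁)/(α_t² c₀ + β_t² c₁) = ½ log(c₁/c₀)` for all `t ∈ (0,1)`. -/
theorem stmt14 (c0 c1 : ℝ) (hc1 : 0 < c1) (hlt : c1 < c0)
    (r : ℝ) (hr : r = c1 / c0)
    (α β : ℝ → ℝ)
    (hα : ∀ t : ℝ, α t = Real.sqrt ((r ^ t - r) / (1 - r)))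
    (hβ : ∀ t : ℝ, β t = Real.sqrt ((1 - r ^ t) / (1 - r))) :
    ∀ t ∈ Set.Ioo (0:ℝ) 1, DifferentiableAt ℝ α t ∧ DifferentiableAt ℝ β t ∧
      (deriv α t * α t * c0 + deriv β t * β t * c1) /
          ((α t) ^ 2 * c0 + (β t) ^ 2 * c1) = (1 / 2) * Real.log (c1 / c0) := by
  have hc0 : 0 < c0 := hc1.trans hlt
  have hr0 : 0 < r := by rw [hr]; positivity
  have hr1 : r < 1 := by rw [hr]; exact (div_lt_one hc0).2 hlt
  have h1r : 0 < 1 - r := by linarith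
  intro t ht
  obtain ⟨ht0, ht1⟩ := ht
  have hrt : 0 < r ^ t := Real.rpow_pos_of_pos hr0 t
  have hgt : r < r ^ t := by
    have := Real.rpow_lt_rpow_of_exponent_gt hr0 hr1 ht1
    simpa [Real.rpow_one] using this
  have hlt1 : r ^ t < 1 := by
    have := Real.rpow_lt_rpow_of_exponent_gt hr0 hr1 ht0
    simpa using this
  set L := Real.log r with hL
  have hrpow : HasDerivAt (fun s : ℝ => r ^ s) (r ^ t * L) t :=
    (Real.hasStrictDerivAt_const_rpow hr0 t).hasDerivAt
  -- α
  have hfa : HasDerivAt (fun s : ℝ => (r ^ s - r) / (1 - r)) (r ^ t * L / (1 - r)) t :=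
    (hrpow.sub_const r).div_const (1 - r)
  have hapos : 0 < (r ^ t - r) / (1 - r) := div_pos (by linarith) h1r
  have hα' : HasDerivAt α (r ^ t * L / (1 - r) / (2 * Real.sqrt ((r ^ t - r) / (1 - r)))) t := by
    have : HasDerivAt (fun s : ℝ => Real.sqrt ((r ^ s - r) / (1 - r)))
        (r ^ t * L / (1 - r) / (2 * Real.sqrt ((r ^ t - r) / (1 - r)))) t :=
      hfa.sqrt (ne_of_gt hapos)
    have hfun : α = fun s : ℝ => Real.sqrt ((r ^ s - r) / (1 - r)) := funext hα
    rw [hfun]; exact this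
  -- β
  have hfb : HasDerivAt (fun s : ℝ => (1 - r ^ s) / (1 - r)) (-(r ^ t * L) / (1 - r)) t :=
    ((hrpow.const_sub 1)).div_const (1 - r)
  have hbpos : 0 < (1 - r ^ t) / (1 - r) := div_pos (by linarith) h1r
  have hβ' : HasDerivAt β (-(r ^ t * L) / (1 - r) / (2 * Real.sqrt ((1 - r ^ t) / (1 - r)))) t := by
    have : HasDerivAt (fun s : ℝ => Real.sqrt ((1 - r ^ s) / (1 - r)))
        (-(r ^ t * L) / (1 - r) / (2 * Real.sqrt ((1 - r ^ t) / (1 - r)))) t :=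
      hfb.sqrt (ne_of_gt hbpos)
    have hfun : β = fun s : ℝ => Real.sqrt ((1 - r ^ s) / (1 - r)) := funext hβ
    rw [hfun]; exact this
  refine ⟨hα'.differentiableAt, hβ'.differentiableAt, ?_⟩
  have hsa : Real.sqrt ((r ^ t - r) / (1 - r)) ≠ 0 := (Real.sqrt_pos.2 hapos).ne'
  have hsb : Real.sqrt ((1 - r ^ t) / (1 - r)) ≠ 0 := (Real.sqrt_pos.2 hbpos).ne'
  have key : ∀ d x : ℝ, x ≠ 0 → d / (2 * x) * x = d / 2 := by
    intro d x hx; field_simp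
  have hda : deriv α t * α t = r ^ t * L / (1 - r) / 2 := by
    rw [hα'.deriv, hα t, key _ _ hsa]
  have hdb : deriv β t * β t = -(r ^ t * L) / (1 - r) / 2 := by
    rw [hβ'.deriv, hβ t, key _ _ hsb]
  have ha2 : (α t) ^ 2 = (r ^ t - r) / (1 - r) := by
    rw [hα t, Real.sq_sqrt hapos.le]
  have hb2 : (β t) ^ 2 = (1 - r ^ t) / (1 - r) := by
    rw [hβ t, Real.sq_sqrt hbpos.le]
  rw [hda, hdb, ha2, hb2, ← hr, ← hL]
  have hrc : r * c0 = c1 := by rw [hr]; field_simp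
  have hnum : r ^ t * L / (1 - r) / 2 * c0 + -(r ^ t * L) / (1 - r) / 2 * c1
      = L / 2 * (r ^ t * (c0 - c1) / (1 - r)) := by ring
  have hden : (r ^ t - r) / (1 - r) * c0 + (1 - r ^ t) / (1 - r) * c1
      = r ^ t * (c0 - c1) / (1 - r) := by
    field_simp
    linear_combination -hrc
  rw [hnum, hden, mul_div_assoc]
  have hne : r ^ t * (c0 - c1) / (1 - r) ≠ 0 :=
    div_ne_zero (mul_ne_zero hrt.ne' (by linarith)) h1r.ne'
  rw [div_self hne]
  ring
end

section
/- Let $\mu^\star \in (0,1)$ and define for $t \in (0,1)$: $\alpha_t = \sqrt{\dfrac{\mu^\star - (\mu^\star)^t}{\mu^\star - 1}}$ and $\beta_t = \sqrt{\dfrac{(\mu^\star)^t - 1}{\mu^\star - 1}}$. Then $\alpha_t^2 + \beta_t^2 = 1$ for all $t$, $\beta_t$ is differentiable on $(0,1)$, and for all $t \in (0,1)$: $\dfrac{\beta_t \dot\beta_t (1 - \mu^\star)}{1 - \beta_t^2(1-\mu^\star)} = \dfrac{1}{2}\left|\log \mu^\star\right|$. -/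
/-- Key computation in Proposition 5.1: for `μ* ∈ (0,1)` and the schedule
`α_t = sqrt((μ* - (μ*)^t)/(μ* - 1))`, `β_t = sqrt(((μ*)^t - 1)/(μ* - 1))`, one has
`α_t² + β_t² = 1`, `β` is differentiable on `(0,1)`, and
`β_t β̇_t (1-μ*)/(1 - β_t²(1-μ*)) = ½ |log μ*|` for all `t ∈ (0,1)`. -/
theorem stmt15 (μstar : ℝ) (hμ : μstar ∈ Set.Ioo (0:ℝ) 1)
    (α β : ℝ → ℝ)
    (hα : ∀ t : ℝ, α t = Real.sqrt ((μstar - μstar ^ t) / (μstar - 1)))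
    (hβ : ∀ t : ℝ, β t = Real.sqrt ((μstar ^ t - 1) / (μstar - 1))) :
    (∀ t ∈ Set.Ioo (0:ℝ) 1, (α t) ^ 2 + (β t) ^ 2 = 1) ∧
      ∀ t ∈ Set.Ioo (0:ℝ) 1, DifferentiableAt ℝ β t ∧
        β t * deriv β t * (1 - μstar) / (1 - (β t) ^ 2 * (1 - μstar)) =
          (1 / 2) * |Real.log μstar| := by
  obtain ⟨hμ0, hμ1⟩ := hμ
  have hden : μstar - 1 < 0 := by linarith
  have hlog : Real.log μstar < 0 := Real.log_neg hμ0 hμ1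
  -- basic facts about μ^t for t ∈ (0,1)
  have hlt1 : ∀ t ∈ Set.Ioo (0:ℝ) 1, μstar ^ t < 1 := fun t ht =>
    Real.rpow_lt_one hμ0.le hμ1 ht.1
  have hgt : ∀ t ∈ Set.Ioo (0:ℝ) 1, μstar < μstar ^ t := fun t ht => by
    have := Real.rpow_lt_rpow_of_exponent_gt hμ0 hμ1 ht.2
    simpa using this
  have hαsq : ∀ t ∈ Set.Ioo (0:ℝ) 1, (α t) ^ 2 = (μstar - μstar ^ t) / (μstar - 1) := by
    intro t ht
    rw [hα]
    exact Real.sq_sqrt (le_of_lt (div_pos_of_neg_of_neg (by linarith [hgt t ht]) hden))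
  have hβsq : ∀ t ∈ Set.Ioo (0:ℝ) 1, (β t) ^ 2 = (μstar ^ t - 1) / (μstar - 1) := by
    intro t ht
    rw [hβ]
    exact Real.sq_sqrt (le_of_lt (div_pos_of_neg_of_neg (by linarith [hlt1 t ht]) hden))
  constructor
  · intro t ht
    rw [hαsq t ht, hβsq t ht, ← add_div,
      show μstar - μstar ^ t + (μstar ^ t - 1) = μstar - 1 by ring, div_self hden.ne]
  · intro t ht
    have hgpos : 0 < (μstar ^ t - 1) / (μstar - 1) := by
      apply div_pos_of_neg_of_neg _ hden
      linarith [hlt1 t ht]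
    -- derivative of g t = (μ^t - 1)/(μ - 1)
    have hg : HasDerivAt (fun s : ℝ => (μstar ^ s - 1) / (μstar - 1))
        (μstar ^ t * Real.log μstar / (μstar - 1)) t := by
      have h1 : HasDerivAt (fun s : ℝ => μstar ^ s) (μstar ^ t * Real.log μstar) t :=
        (Real.hasStrictDerivAt_const_rpow hμ0 t).hasDerivAt
      simpa using ((h1.sub_const 1).div_const (μstar - 1))
    have hβd : HasDerivAt β
        (μstar ^ t * Real.log μstar / (μstar - 1) /
          (2 * Real.sqrt ((μstar ^ t - 1) / (μstar - 1)))) t := by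
      exact (hg.sqrt hgpos.ne').congr_of_eventuallyEq (Filter.Eventually.of_forall hβ)
    refine ⟨hβd.differentiableAt, ?_⟩
    have hsq : Real.sqrt ((μstar ^ t - 1) / (μstar - 1)) > 0 := Real.sqrt_pos.mpr hgpos
    have hμt : (0:ℝ) < μstar ^ t := Real.rpow_pos_of_pos hμ0 t
    have h2 : 1 - (μstar ^ t - 1) / (μstar - 1) * (1 - μstar) = μstar ^ t := by
      have h3 : (μstar ^ t - 1) / (μstar - 1) * (1 - μstar) = 1 - μstar ^ t := by
        rw [div_mul_eq_mul_div, div_eq_iff hden.ne]; ring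
      rw [h3]; ring
    rw [hβd.deriv, hβ t, Real.sq_sqrt hgpos.le, h2, abs_of_neg hlog]
    have key : Real.sqrt ((μstar ^ t - 1) / (μstar - 1)) *
        (μstar ^ t * Real.log μstar / (μstar - 1) /
          (2 * Real.sqrt ((μstar ^ t - 1) / (μstar - 1)))) =
        μstar ^ t * Real.log μstar / (μstar - 1) / 2 := by
      rw [mul_comm 2, ← mul_div_assoc, mul_div_mul_left _ _ hsq.ne']
    rw [key, div_div, div_mul_eq_mul_div, div_div, div_eq_iff (mul_ne_zero (mul_ne_zero hden.ne two_ne_zero) hμt.ne' :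
      (μstar - 1) * 2 * μstar ^ t ≠ 0)]
    ring
end

section
/- Let $C_0, C_1$ be real symmetric positive definite $d \times d$ matrices that commute ($C_0 C_1 = C_1 C_0$), and suppose every eigenvalue of $C_1 C_0^{-1}$ lies in $(0, 1]$; let $\mu^\star$ be the smallest such eigenvalue and assume $\mu^\star < 1$. Define for $t \in (0,1)$: $\alpha_t = \sqrt{\dfrac{\mu^\star - (\mu^\star)^t}{\mu^\star - 1}}$, $\beta_t = \sqrt{\dfrac{(\mu^\star)^t - 1}{\mu^\star - 1}}$, and $B(t) = (\dot\alpha_t \alpha_t C_0 + \dot\beta_t \beta_t C_1)(\alpha_t^2 C_0 + \beta_t^2 C_1)^{-1}$, where $\dot\alpha_t, \dot\beta_t$ are the derivatives of $\alpha_t, \beta_t$. Then for every $t \in (0,1)$, the spectral norm (operator $2$-norm) of $B(t)$ equals $\dfrac{1}{2}\left|\log \mu^\star\right|$. -/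
open Matrix
open scoped Matrix.Norms.L2Operator

private lemma diag_norm_le17 {d : ℕ} (v : Fin d → ℝ) {c : ℝ} (hc : 0 ≤ c)
    (h : ∀ i, |v i| ≤ c) :
    ‖(Matrix.diagonal v : Matrix (Fin d) (Fin d) ℝ)‖ ≤ c := by
  rw [Matrix.l2_opNorm_def]
  refine ContinuousLinearMap.opNorm_le_bound _ hc fun x => ?_
  have hx : ∀ i, (toEuclideanLin (diagonal v) x : EuclideanSpace ℝ (Fin d)) i = v i * x i := by
    intro i
    simp [Matrix.toEuclideanLin_apply, Matrix.mulVec, diagonal_dotProduct]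
  rw [LinearEquiv.trans_apply, LinearMap.coe_toContinuousLinearMap']
  rw [EuclideanSpace.norm_eq, EuclideanSpace.norm_eq]
  have h1 : ∑ i, ‖(toEuclideanLin (diagonal v) x : EuclideanSpace ℝ (Fin d)) i‖ ^ 2
      ≤ c ^ 2 * ∑ i, ‖x i‖ ^ 2 := by
    rw [Finset.mul_sum]
    refine Finset.sum_le_sum fun i _ => ?_
    rw [hx i]
    have := h i
    rw [Real.norm_eq_abs, Real.norm_eq_abs, abs_mul]
    calc (|v i| * |x i|) ^ 2 = |v i| ^ 2 * |x i| ^ 2 := by ring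
    _ ≤ c ^ 2 * |x i| ^ 2 :=
        mul_le_mul_of_nonneg_right (by nlinarith [abs_nonneg (v i)]) (sq_nonneg _)
  calc Real.sqrt (∑ i, ‖(toEuclideanLin (diagonal v) x : EuclideanSpace ℝ (Fin d)) i‖ ^ 2)
      ≤ Real.sqrt (c ^ 2 * ∑ i, ‖x i‖ ^ 2) := Real.sqrt_le_sqrt h1
    _ = c * Real.sqrt (∑ i, ‖x i‖ ^ 2) := by
        rw [Real.sqrt_mul (sq_nonneg c), Real.sqrt_sq hc]

private lemma diag_norm_ge17 {d : ℕ} (v : Fin d → ℝ) (i : Fin d) :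
    |v i| ≤ ‖(Matrix.diagonal v : Matrix (Fin d) (Fin d) ℝ)‖ := by
  rw [Matrix.l2_opNorm_def]
  have hle := ((toEuclideanLin (𝕜 := ℝ) (m := Fin d) (n := Fin d)).trans
    LinearMap.toContinuousLinearMap (diagonal v)).le_opNorm (EuclideanSpace.single i 1)
  rw [EuclideanSpace.norm_single] at hle
  simp only [norm_one, mul_one] at hle
  refine le_trans ?_ hle
  have : (toEuclideanLin (diagonal v) (EuclideanSpace.single i 1) : EuclideanSpace ℝ (Fin d))
      = EuclideanSpace.single i (v i) := by
    ext j
    rw [Matrix.toEuclideanLin_apply]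
    simp only [PiLp.toLp_apply, EuclideanSpace.ofLp_single,
      Matrix.mulVec_single, mul_one, EuclideanSpace.single_apply]
    by_cases hji : j = i <;> simp [hji, Matrix.diagonal_apply]
  rw [LinearEquiv.trans_apply, LinearMap.coe_toContinuousLinearMap', this,
    EuclideanSpace.norm_single, Real.norm_eq_abs]

/-- Proposition 5.1: for commuting symmetric positive definite `C₀, C₁` with all
eigenvalues of `C₁ C₀⁻¹` in `(0,1]`, smallest eigenvalue `μ* < 1`, and the designed schedule
`α_t = sqrt((μ* - (μ*)^t)/(μ* - 1))`, `β_t = sqrt(((μ*)^t - 1)/(μ* - 1))`, the drift matrix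
`B(t) = (α̇_t α_t C₀ + β̇_t β_t C₁)(α_t² C₀ + β_t² C₁)⁻¹` has spectral norm `½|log μ*|`
for every `t ∈ (0,1)`. -/
theorem stmt17 {d : ℕ} (C0 C1 : Matrix (Fin d) (Fin d) ℝ)
    (hC0 : C0.PosDef) (hC1 : C1.PosDef) (hcomm : C0 * C1 = C1 * C0)
    (hspec : ∀ μ ∈ spectrum ℝ (C1 * C0⁻¹), μ ∈ Set.Ioc (0:ℝ) 1)
    (μstar : ℝ) (hμmem : μstar ∈ spectrum ℝ (C1 * C0⁻¹))
    (hμmin : ∀ μ ∈ spectrum ℝ (C1 * C0⁻¹), μstar ≤ μ)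
    (hμlt : μstar < 1)
    (α β : ℝ → ℝ)
    (hα : ∀ t : ℝ, α t = Real.sqrt ((μstar - μstar ^ t) / (μstar - 1)))
    (hβ : ∀ t : ℝ, β t = Real.sqrt ((μstar ^ t - 1) / (μstar - 1)))
    (B : ℝ → Matrix (Fin d) (Fin d) ℝ)
    (hB : ∀ t : ℝ, B t = ((deriv α t * α t) • C0 + (deriv β t * β t) • C1) *
        ((α t) ^ 2 • C0 + (β t) ^ 2 • C1)⁻¹) :
    ∀ t ∈ Set.Ioo (0:ℝ) 1,
      ‖LinearMap.toContinuousLinearMap (Matrix.toEuclideanLin (B t))‖ =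
        (1 / 2) * |Real.log μstar| := by
  intro t ht
  obtain ⟨ht0, ht1⟩ := ht
  rcases Nat.eq_zero_or_pos d with hd | hd
  · exfalso
    subst hd
    exact spectrum.mem_iff.mp hμmem (isUnit_of_subsingleton _)
  haveI : Nonempty (Fin d) := Fin.pos_iff_nonempty.mp hd
  haveI : Nontrivial (Matrix (Fin d) (Fin d) ℝ) := inferInstance
  -- scalar setup
  have hμpos : 0 < μstar := (hspec μstar hμmem).1
  have hL : Real.log μstar < 0 := Real.log_neg hμpos hμlt
  set L := Real.log μstar with hLdef
  set e := μstar ^ t with hedef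
  have hepos : 0 < e := Real.rpow_pos_of_pos hμpos t
  have heμ : μstar < e := by
    simpa [Real.rpow_one] using Real.rpow_lt_rpow_of_exponent_gt hμpos hμlt ht1
  have he1 : e < 1 := by
    simpa [Real.rpow_zero] using Real.rpow_lt_rpow_of_exponent_gt hμpos hμlt ht0
  have hμ1 : μstar - 1 ≠ 0 := by linarith
  set a := -(e * L) / (2 * (μstar - 1)) with hadef
  set b := e * L / (2 * (μstar - 1)) with hbdef
  set p := (μstar - e) / (μstar - 1) with hpdef
  set q := (e - 1) / (μstar - 1) with hqdef
  have hppos : 0 < p := div_pos_of_neg_of_neg (by linarith) (by linarith)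
  have hqpos : 0 < q := div_pos_of_neg_of_neg (by linarith) (by linarith)
  have hbpos : 0 < b :=
    div_pos_of_neg_of_neg (mul_neg_of_pos_of_neg hepos hL) (by linarith)
  have hab : a = -b := by rw [hadef, hbdef]; ring
  -- derivatives
  have hrpow : HasDerivAt (fun s : ℝ => μstar ^ s) (e * L) t :=
    (Real.hasStrictDerivAt_const_rpow hμpos t).hasDerivAt
  have hda : deriv α t * α t = a := by
    have hgα : HasDerivAt (fun s : ℝ => (μstar - μstar ^ s) / (μstar - 1))
        ((0 - e * L) / (μstar - 1)) t := ((hasDerivAt_const t μstar).sub hrpow).div_const _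
    have hαfun : α = fun s : ℝ => Real.sqrt ((μstar - μstar ^ s) / (μstar - 1)) := funext hα
    have hppos' : ((μstar - e) / (μstar - 1) : ℝ) ≠ 0 := hppos.ne'
    have hαd : HasDerivAt α
        ((0 - e * L) / (μstar - 1) / (2 * Real.sqrt ((μstar - e) / (μstar - 1)))) t := by
      rw [hαfun]; exact hgα.sqrt hppos'
    rw [hαd.deriv, hα t, ← hedef, hadef]
    set s : ℝ := Real.sqrt ((μstar - e) / (μstar - 1)) with hsdef
    have hs : s ≠ 0 := by
      rw [hsdef]; positivity
    field_simp
    ring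
  have hdb : deriv β t * β t = b := by
    have hgβ : HasDerivAt (fun s : ℝ => (μstar ^ s - 1) / (μstar - 1))
        ((e * L - 0) / (μstar - 1)) t := (hrpow.sub (hasDerivAt_const t 1)).div_const _
    have hβfun : β = fun s : ℝ => Real.sqrt ((μstar ^ s - 1) / (μstar - 1)) := funext hβ
    have hqpos' : ((e - 1) / (μstar - 1) : ℝ) ≠ 0 := hqpos.ne'
    have hβd : HasDerivAt β
        ((e * L - 0) / (μstar - 1) / (2 * Real.sqrt ((e - 1) / (μstar - 1)))) t := by
      rw [hβfun]; exact hgβ.sqrt hqpos'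
    rw [hβd.deriv, hβ t, ← hedef, hbdef]
    set s : ℝ := Real.sqrt ((e - 1) / (μstar - 1)) with hsdef
    have hs : s ≠ 0 := by
      rw [hsdef]; positivity
    field_simp
    ring
  have hat2 : α t ^ 2 = p := by rw [hα, ← hedef, hpdef]; exact Real.sq_sqrt hppos.le
  have hbt2 : β t ^ 2 = q := by rw [hβ, ← hedef, hqdef]; exact Real.sq_sqrt hqpos.le
  -- matrix algebra
  have hdet0 : IsUnit C0.det := hC0.det_pos.ne'.isUnit
  have hC0C0 : C0 * C0⁻¹ = 1 := Matrix.mul_nonsing_inv _ hdet0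
  have hC0C0' : C0⁻¹ * C0 = 1 := Matrix.nonsing_inv_mul _ hdet0
  set M := C1 * C0⁻¹ with hMdef
  have hMC0 : M * C0 = C1 := by rw [hMdef, Matrix.mul_assoc, hC0C0', Matrix.mul_one]
  have hcomm' : C0⁻¹ * C1 = M := by
    have h2 : C0⁻¹ * (C1 * C0) * C0⁻¹ = C0⁻¹ * C1 := by
      simp only [Matrix.mul_assoc]
      rw [hC0C0, Matrix.mul_one]
    have h1 : C0⁻¹ * (C0 * C1) * C0⁻¹ = C1 * C0⁻¹ := by
      simp only [Matrix.mul_assoc]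
      rw [← Matrix.mul_assoc C0⁻¹ C0, hC0C0', Matrix.one_mul]
    rw [hMdef, ← h2, ← hcomm, h1]
  have hMh : M.IsHermitian := by
    have h0 : C0⁻¹.IsHermitian := hC0.isHermitian.inv
    show Mᴴ = M
    rw [hMdef, Matrix.conjTranspose_mul, h0.eq, hC1.isHermitian.eq]
    rw [hMdef] at hcomm'
    exact hcomm'
  set ev := hMh.eigenvalues with hevdef
  set W := (hMh.eigenvectorUnitary : Matrix (Fin d) (Fin d) ℝ) with hWdef
  have hWW : W * star W = 1 := Unitary.coe_mul_star_self _
  have hsWW : star W * W = 1 := Unitary.coe_star_mul_self _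
  have hspect : M = W * diagonal ev * star W := by
    have h := hMh.spectral_theorem
    rwa [RCLike.ofReal_real_eq_id, Function.id_comp] at h
  -- eigenvalue facts
  have hev_mem : ∀ i, ev i ∈ spectrum ℝ M := fun i => hMh.eigenvalues_mem_spectrum_real i
  have hev_le1 : ∀ i, ev i ≤ 1 := fun i => (hspec _ (hev_mem i)).2
  have hev_pos : ∀ i, 0 < ev i := fun i => (hspec _ (hev_mem i)).1
  have hev_geμ : ∀ i, μstar ≤ ev i := fun i => hμmin _ (hev_mem i)
  -- B t as a conjugated diagonal matrix
  have conj_lin : ∀ (x y : ℝ),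
      x • (1 : Matrix (Fin d) (Fin d) ℝ) + y • M
        = W * diagonal (fun i => x + y * ev i) * star W := by
    intro x y
    have hdiag : x • (1 : Matrix (Fin d) (Fin d) ℝ) + y • diagonal ev
        = diagonal (fun i => x + y * ev i) := by
      ext i j
      by_cases h : i = j <;>
        simp [h, Matrix.one_apply, Matrix.diagonal_apply, Matrix.add_apply]
    rw [hspect, ← hdiag, Matrix.mul_add, Matrix.add_mul]
    congr 1
    · rw [Matrix.mul_smul, Matrix.mul_one, Matrix.smul_mul, hWW]
    · rw [Matrix.mul_smul, Matrix.smul_mul]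
  have hnum : (deriv α t * α t) • C0 + (deriv β t * β t) • C1
      = (a • (1 : Matrix (Fin d) (Fin d) ℝ) + b • M) * C0 := by
    rw [hda, hdb, Matrix.add_mul, Matrix.smul_mul, Matrix.smul_mul, Matrix.one_mul, hMC0]
  have hden : (α t) ^ 2 • C0 + (β t) ^ 2 • C1
      = (p • (1 : Matrix (Fin d) (Fin d) ℝ) + q • M) * C0 := by
    rw [hat2, hbt2, Matrix.add_mul, Matrix.smul_mul, Matrix.smul_mul, Matrix.one_mul, hMC0]
  have hBt : B t = (a • (1 : Matrix (Fin d) (Fin d) ℝ) + b • M)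
      * (p • (1 : Matrix (Fin d) (Fin d) ℝ) + q • M)⁻¹ := by
    rw [hB, hnum, hden, Matrix.mul_inv_rev, Matrix.mul_assoc,
      ← Matrix.mul_assoc C0 C0⁻¹ _, hC0C0, Matrix.one_mul]
  have hdenne : ∀ i, p + q * ev i ≠ 0 := fun i => by
    have := hev_pos i; positivity
  have hdinv : (W * diagonal (fun i => p + q * ev i) * star W)⁻¹
      = W * diagonal (fun i => (p + q * ev i)⁻¹) * star W := by
    refine Matrix.inv_eq_right_inv ?_
    have hdd : diagonal (fun i => p + q * ev i) * diagonal (fun i => (p + q * ev i)⁻¹)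
        = (1 : Matrix (Fin d) (Fin d) ℝ) := by
      rw [Matrix.diagonal_mul_diagonal]
      rw [show (fun i => (p + q * ev i) * (p + q * ev i)⁻¹) = fun _ => (1:ℝ) from
        funext fun i => mul_inv_cancel₀ (hdenne i), Matrix.diagonal_one]
    calc (W * diagonal (fun i => p + q * ev i) * star W)
          * (W * diagonal (fun i => (p + q * ev i)⁻¹) * star W)
        = W * (diagonal (fun i => p + q * ev i) * ((star W * W)
            * (diagonal (fun i => (p + q * ev i)⁻¹) * star W))) := by
          simp only [Matrix.mul_assoc]
      _ = 1 := by
          rw [hsWW, Matrix.one_mul, ← Matrix.mul_assoc (diagonal _), hdd, Matrix.one_mul, hWW]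
  have hfinal : B t = W * diagonal (fun i => (a + b * ev i) * (p + q * ev i)⁻¹) * star W := by
    rw [hBt, conj_lin a b, conj_lin p q, hdinv]
    calc (W * diagonal (fun i => a + b * ev i) * star W)
          * (W * diagonal (fun i => (p + q * ev i)⁻¹) * star W)
        = W * (diagonal (fun i => a + b * ev i) * ((star W * W)
            * (diagonal (fun i => (p + q * ev i)⁻¹) * star W))) := by
          simp only [Matrix.mul_assoc]
      _ = W * diagonal (fun i => (a + b * ev i) * (p + q * ev i)⁻¹) * star W := by
          rw [hsWW, Matrix.one_mul, ← Matrix.mul_assoc (diagonal _),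
            Matrix.diagonal_mul_diagonal, Matrix.mul_assoc]
  -- pass to the matrix operator norm
  have hnorm_eq : ‖LinearMap.toContinuousLinearMap (Matrix.toEuclideanLin (B t))‖ = ‖B t‖ := by
    rw [Matrix.l2_opNorm_def, LinearEquiv.trans_apply]
  rw [hnorm_eq, hfinal]
  set w : Fin d → ℝ := fun i => (a + b * ev i) * (p + q * ev i)⁻¹ with hwdef
  have hWnorm : ‖W * diagonal w * star W‖ = ‖diagonal w‖ := by
    rw [Matrix.mul_assoc]
    rw [show (W : Matrix (Fin d) (Fin d) ℝ) = (hMh.eigenvectorUnitary : Matrix (Fin d) (Fin d) ℝ)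
      from rfl]
    rw [CStarRing.norm_coe_unitary_mul hMh.eigenvectorUnitary
      (diagonal w * star (hMh.eigenvectorUnitary : Matrix (Fin d) (Fin d) ℝ))]
    rw [← Unitary.coe_star]
    exact CStarRing.norm_mul_coe_unitary _ _
  rw [hWnorm]
  -- scalar bounds on the diagonal entries
  have hub : ∀ i, |w i| ≤ -L / 2 := by
    intro i
    have hν1 : ev i ≤ 1 := hev_le1 i
    have hνμ : μstar ≤ ev i := hev_geμ i
    have hνpos : 0 < ev i := hev_pos i
    have hspos : 0 < p + q * ev i := by positivity
    have hval : a + b * ev i = b * (ev i - 1) := by rw [hab]; ring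
    have habs : |w i| = b * (1 - ev i) / (p + q * ev i) := by
      rw [hwdef]
      simp only
      rw [abs_mul, hval, abs_of_nonpos (mul_nonpos_of_nonneg_of_nonpos hbpos.le (by linarith)),
        abs_of_pos (inv_pos.mpr hspos)]
      rw [div_eq_mul_inv]
      ring_nf
    rw [habs, div_le_iff₀ hspos]
    have expand : -L / 2 * (p + q * ev i) - b * (1 - ev i)
        = (-L / (2 * (1 - μstar))) * (ev i - μstar) := by
      have hμ1' : (1:ℝ) - μstar ≠ 0 := by linarith
      rw [hbdef, hpdef, hqdef]
      field_simp
      ring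
    have hX : 0 ≤ -L / (2 * (1 - μstar)) * (ev i - μstar) :=
      mul_nonneg (div_nonneg (by linarith) (by linarith)) (by linarith)
    linarith [expand, hX]
  have hLpos : 0 ≤ -L / 2 := by linarith
  -- the bound is attained
  obtain ⟨i0, hi0⟩ : ∃ i, ev i = μstar := by
    have h := hμmem
    rw [hMh.spectrum_real_eq_range_eigenvalues] at h
    obtain ⟨i0, hi0⟩ := h
    exact ⟨i0, hi0⟩
  have hwi0 : |w i0| = -L / 2 := by
    have h1 : p + q * μstar = e := by
      rw [hpdef, hqdef]; field_simp; ring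
    have h2 : a + b * μstar = e * L / 2 := by
      rw [hadef, hbdef]; field_simp; ring
    rw [hwdef]
    simp only [hi0, h1, h2]
    rw [abs_of_nonpos (by
      have h3 : e * L / 2 * e⁻¹ = L / 2 := by
        field_simp
      rw [h3]; linarith)]
    have h3 : e * L / 2 * e⁻¹ = L / 2 := by
      field_simp
    rw [h3]; ring
  have hnormval : ‖(diagonal w : Matrix (Fin d) (Fin d) ℝ)‖ = -L / 2 := by
    refine le_antisymm (diag_norm_le17 w hLpos hub) ?_
    calc -L / 2 = |w i0| := hwi0.symm
      _ ≤ _ := diag_norm_ge17 w i0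
  rw [hnormval, abs_of_neg hL]
  ring
end

section
/- Let $z$ and $x_1$ be square-integrable random vectors in $\mathbb{R}^d$ on a probability space, let $\alpha, \beta : [0,1] \to \mathbb{R}$ be continuously differentiable, and set $I_t = \alpha_t z + \beta_t x_1$ and $\dot I_t = \dot\alpha_t z + \dot\beta_t x_1$. Let $\varphi : \mathbb{R}^d \to \mathbb{R}$ be continuously differentiable with bounded gradient. Then for every $t \in [0,1]$: $\mathbb{E}[\varphi(I_t)] = \mathbb{E}[\varphi(I_0)] + \int_0^t \mathbb{E}\big[\dot I_s \cdot \nabla\varphi(I_s)\big]\, \mathrm{d}s$, and moreover $\mathbb{E}[\dot I_s \cdot \nabla\varphi(I_s)] = \mathbb{E}\big[\mathbb{E}[\dot I_s \mid \sigma(I_s)] \cdot \nabla\varphi(I_s)\big]$ for every $s \in [0,1]$. -/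
open MeasureTheory
open scoped RealInnerProductSpace

lemma aux_condexp_inner {Ω : Type*} {m m0 : MeasurableSpace Ω} (hm : m ≤ m0)
    (μ : @Measure Ω m0) [IsFiniteMeasure μ] {E : Type*} [NormedAddCommGroup E]
    [InnerProductSpace ℝ E] [CompleteSpace E]
    {f g : Ω → E} (hf : MemLp f 2 μ) (hg : MemLp g 2 μ)
    (hgm : AEStronglyMeasurable[m] g μ) :
    ∫ ω, ⟪f ω, g ω⟫ ∂μ = ∫ ω, ⟪(μ[f|m]) ω, g ω⟫ ∂μ := by
  set F := hf.toLp f with hF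
  set G := hg.toLp g with hG
  have hFf : (F : Ω → E) =ᵐ[μ] f := hf.coeFn_toLp
  have hGg : (G : Ω → E) =ᵐ[μ] g := hg.coeFn_toLp
  have hGm : AEStronglyMeasurable[m] (G : Ω → E) μ := hgm.congr hGg.symm
  have h1 : (condExpL2 E ℝ hm F : Ω → E) =ᵐ[μ] μ[f|m] := by
    refine ae_eq_condExp_of_forall_setIntegral_eq hm (hf.integrable one_le_two)
      (fun s _ _ => (integrable_condExpL2_of_isFiniteMeasure hm).integrableOn)
      (fun s hs hμs => ?_) (aestronglyMeasurable_condExpL2 hm F)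
    rw [integral_condExpL2_eq hm F hs hμs.ne]
    exact setIntegral_congr_ae (hm s hs) (hFf.mono fun x hx _ => hx)
  have h2 : ∫ ω, ⟪f ω, g ω⟫ ∂μ = ∫ ω, ⟪(F : Ω → E) ω, (G : Ω → E) ω⟫ ∂μ := by
    refine integral_congr_ae ?_
    filter_upwards [hFf, hGg] with ω h1 h2
    rw [h1, h2]
  have h3 : ∫ ω, ⟪(condExpL2 E ℝ hm F : Ω → E) ω, (G : Ω → E) ω⟫ ∂μ
      = ∫ ω, ⟪(μ[f|m]) ω, g ω⟫ ∂μ := by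
    refine integral_congr_ae ?_
    filter_upwards [h1, hGg] with ω h1 h2
    rw [h1, h2]
  rw [h2, ← L2.inner_def, ← inner_condExpL2_eq_inner_fun hm F G hGm, L2.inner_def, h3]

/-- Weak-form transport identity underlying the stochastic interpolant generative ODE:
for square-integrable `z, x1` in `ℝ^d`, a `C¹` schedule `α, β` on `[0,1]`, `I_t = α_t z + β_t x1`,
`İ_t = α̇_t z + β̇_t x1`, and a `C¹` test function `φ` with bounded gradient,
`E[φ(I_t)] = E[φ(I_0)] + ∫_0^t E[İ_s ⬝ ∇φ(I_s)] ds` for all `t ∈ [0,1]`, and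
`E[İ_s ⬝ ∇φ(I_s)] = E[E[İ_s | σ(I_s)] ⬝ ∇φ(I_s)]` for all `s ∈ [0,1]`. -/
theorem stmt18 {Ω : Type*} [MeasurableSpace Ω] (P : Measure Ω) [IsProbabilityMeasure P]
    {d : ℕ} (z x1 : Ω → EuclideanSpace ℝ (Fin d))
    (hzm : Measurable z) (hx1m : Measurable x1)
    (hz2 : MemLp z 2 P) (hx12 : MemLp x1 2 P)
    (α β α' β' : ℝ → ℝ)
    (hα : ∀ t ∈ Set.Icc (0:ℝ) 1, HasDerivAt α (α' t) t)
    (hβ : ∀ t ∈ Set.Icc (0:ℝ) 1, HasDerivAt β (β' t) t)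
    (hα'c : ContinuousOn α' (Set.Icc 0 1)) (hβ'c : ContinuousOn β' (Set.Icc 0 1))
    (φ : EuclideanSpace ℝ (Fin d) → ℝ) (hφ : ContDiff ℝ 1 φ)
    (K : ℝ) (hgrad : ∀ x, ‖gradient φ x‖ ≤ K) :
    (∀ t ∈ Set.Icc (0:ℝ) 1,
      ∫ ω, φ (α t • z ω + β t • x1 ω) ∂P =
        (∫ ω, φ (α 0 • z ω + β 0 • x1 ω) ∂P) +
          ∫ s in (0:ℝ)..t, ∫ ω,
            ⟪α' s • z ω + β' s • x1 ω, gradient φ (α s • z ω + β s • x1 ω)⟫ ∂P) ∧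
    ∀ s ∈ Set.Icc (0:ℝ) 1,
      ∫ ω, ⟪α' s • z ω + β' s • x1 ω, gradient φ (α s • z ω + β s • x1 ω)⟫ ∂P =
        ∫ ω, ⟪(P[fun ω' => α' s • z ω' + β' s • x1 ω' |
            MeasurableSpace.comap (fun ω' => α s • z ω' + β s • x1 ω') inferInstance]) ω,
          gradient φ (α s • z ω + β s • x1 ω)⟫ ∂P := by
  have hK0 : (0:ℝ) ≤ K := le_trans (norm_nonneg _) (hgrad 0)
  have hφdiff : Differentiable ℝ φ := hφ.differentiable one_ne_zero
  have hgc : Continuous (gradient φ) :=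
    (InnerProductSpace.toDual ℝ _).symm.continuous.comp (hφ.continuous_fderiv one_ne_zero)
  have hfd : ∀ p v, (fderiv ℝ φ p) v = ⟪gradient φ p, v⟫ := fun p v => by
    rw [show gradient φ p = (InnerProductSpace.toDual ℝ _).symm (fderiv ℝ φ p) from rfl,
      InnerProductSpace.toDual_symm_apply]
  have hfdK : ∀ p, ‖fderiv ℝ φ p‖ ≤ K := fun p => by
    have h := hgrad p
    rwa [show gradient φ p = (InnerProductSpace.toDual ℝ _).symm (fderiv ℝ φ p) from rfl,
      LinearIsometryEquiv.norm_map] at h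
  have hlip : ∀ x y : EuclideanSpace ℝ (Fin d), ‖φ x - φ y‖ ≤ K * ‖x - y‖ := fun x y =>
    convex_univ.norm_image_sub_le_of_norm_fderiv_le (fun p _ => hφdiff p) (fun p _ => hfdK p)
      (Set.mem_univ _) (Set.mem_univ _)
  have hαc : ContinuousOn α (Set.Icc 0 1) := fun u hu => (hα u hu).continuousAt.continuousWithinAt
  have hβc : ContinuousOn β (Set.Icc 0 1) := fun u hu => (hβ u hu).continuousAt.continuousWithinAt
  obtain ⟨A, hA⟩ := isCompact_Icc.exists_bound_of_continuousOn hαc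
  obtain ⟨B, hB⟩ := isCompact_Icc.exists_bound_of_continuousOn hβc
  obtain ⟨A', hA'⟩ := isCompact_Icc.exists_bound_of_continuousOn hα'c
  obtain ⟨B', hB'⟩ := isCompact_Icc.exists_bound_of_continuousOn hβ'c
  have hzi : Integrable (fun ω => ‖z ω‖) P := (hz2.integrable one_le_two).norm
  have hx1i : Integrable (fun ω => ‖x1 ω‖) P := (hx12.integrable one_le_two).norm
  have hImeas : ∀ u v : ℝ, Measurable fun ω => u • z ω + v • x1 ω := fun u v =>
    (hzm.const_smul u).add (hx1m.const_smul v)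
  have hFmeas : ∀ u v : ℝ, AEStronglyMeasurable (fun ω => φ (u • z ω + v • x1 ω)) P := fun u v =>
    (hφ.continuous.measurable.comp (hImeas u v)).aestronglyMeasurable
  have hGmeas : ∀ a b u v : ℝ, AEStronglyMeasurable
      (fun ω => ⟪a • z ω + b • x1 ω, gradient φ (u • z ω + v • x1 ω)⟫) P := fun a b u v =>
    ((hImeas a b).inner (hgc.measurable.comp (hImeas u v))).aestronglyMeasurable
  have hInorm : ∀ (u v : ℝ) ω, ‖u • z ω + v • x1 ω‖ ≤ ‖u‖ * ‖z ω‖ + ‖v‖ * ‖x1 ω‖ := by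
    intro u v ω
    refine (norm_add_le _ _).trans ?_
    rw [norm_smul, norm_smul]
  have hFbd : ∀ u ∈ Set.Icc (0:ℝ) 1, ∀ ω, ‖φ (α u • z ω + β u • x1 ω)‖ ≤
      ‖φ 0‖ + K * (A * ‖z ω‖ + B * ‖x1 ω‖) := by
    intro u hu ω
    have h1 := hlip (α u • z ω + β u • x1 ω) 0
    rw [sub_zero] at h1
    have h2 := hInorm (α u) (β u) ω
    have h3 : ‖α u‖ * ‖z ω‖ ≤ A * ‖z ω‖ := mul_le_mul_of_nonneg_right (hA u hu) (norm_nonneg _)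
    have h4 : ‖β u‖ * ‖x1 ω‖ ≤ B * ‖x1 ω‖ := mul_le_mul_of_nonneg_right (hB u hu) (norm_nonneg _)
    have h5 : ‖φ (α u • z ω + β u • x1 ω)‖ - ‖φ 0‖ ≤ K * ‖α u • z ω + β u • x1 ω‖ :=
      le_trans (norm_sub_norm_le _ _) h1
    have h6 : K * ‖α u • z ω + β u • x1 ω‖ ≤ K * (A * ‖z ω‖ + B * ‖x1 ω‖) :=
      mul_le_mul_of_nonneg_left (h2.trans (by linarith)) hK0
    linarith
  have hA'0 : 0 ≤ A' := le_trans (norm_nonneg _) (hA' 0 ⟨le_rfl, zero_le_one⟩)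
  have hB'0 : 0 ≤ B' := le_trans (norm_nonneg _) (hB' 0 ⟨le_rfl, zero_le_one⟩)
  have hGbd : ∀ u ∈ Set.Icc (0:ℝ) 1, ∀ ω,
      ‖⟪α' u • z ω + β' u • x1 ω, gradient φ (α u • z ω + β u • x1 ω)⟫‖ ≤
      K * (A' * ‖z ω‖ + B' * ‖x1 ω‖) := by
    intro u hu ω
    refine (abs_real_inner_le_norm _ _).trans ?_
    have h2 := hInorm (α' u) (β' u) ω
    have h3 : ‖α' u‖ * ‖z ω‖ ≤ A' * ‖z ω‖ := mul_le_mul_of_nonneg_right (hA' u hu) (norm_nonneg _)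
    have h4 : ‖β' u‖ * ‖x1 ω‖ ≤ B' * ‖x1 ω‖ := mul_le_mul_of_nonneg_right (hB' u hu) (norm_nonneg _)
    have h5 : (0:ℝ) ≤ A' * ‖z ω‖ + B' * ‖x1 ω‖ := by positivity
    calc ‖α' u • z ω + β' u • x1 ω‖ * ‖gradient φ (α u • z ω + β u • x1 ω)‖
        ≤ (A' * ‖z ω‖ + B' * ‖x1 ω‖) * K :=
          mul_le_mul (h2.trans (by linarith)) (hgrad _) (norm_nonneg _) h5
      _ = K * (A' * ‖z ω‖ + B' * ‖x1 ω‖) := mul_comm _ _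
  have hbound0 : Integrable (fun ω => ‖φ 0‖ + K * (A * ‖z ω‖ + B * ‖x1 ω‖)) P :=
    (integrable_const _).add (((hzi.const_mul A).add (hx1i.const_mul B)).const_mul K)
  have hbound1 : Integrable (fun ω => K * (A' * ‖z ω‖ + B' * ‖x1 ω‖)) P :=
    ((hzi.const_mul A').add (hx1i.const_mul B')).const_mul K
  have hFint : ∀ u ∈ Set.Icc (0:ℝ) 1, Integrable (fun ω => φ (α u • z ω + β u • x1 ω)) P :=
    fun u hu => hbound0.mono' (hFmeas _ _) (Filter.Eventually.of_forall (hFbd u hu))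
  have hptderiv : ∀ s ∈ Set.Icc (0:ℝ) 1, ∀ ω,
      HasDerivAt (fun u => φ (α u • z ω + β u • x1 ω))
        ⟪α' s • z ω + β' s • x1 ω, gradient φ (α s • z ω + β s • x1 ω)⟫ s := by
    intro s hs ω
    have hI : HasDerivAt (fun u => α u • z ω + β u • x1 ω)
        (α' s • z ω + β' s • x1 ω) s := ((hα s hs).smul_const _).add ((hβ s hs).smul_const _)
    have h2 := ((hφdiff _).hasFDerivAt).comp_hasDerivAt s hI
    rw [hfd, real_inner_comm] at h2
    exact h2
  have hGderiv : ∀ s ∈ Set.Ioo (0:ℝ) 1,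
      HasDerivAt (fun u => ∫ ω, φ (α u • z ω + β u • x1 ω) ∂P)
        (∫ ω, ⟪α' s • z ω + β' s • x1 ω, gradient φ (α s • z ω + β s • x1 ω)⟫ ∂P) s := by
    intro s hs
    have hε0 : 0 < min s (1 - s) := lt_min hs.1 (by linarith [hs.2])
    have hball : Metric.ball s (min s (1 - s)) ⊆ Set.Icc 0 1 := by
      intro u hu
      rw [Metric.mem_ball, Real.dist_eq] at hu
      have h1 := abs_lt.mp hu
      have h2 : min s (1 - s) ≤ s := min_le_left _ _
      have h3 : min s (1 - s) ≤ 1 - s := min_le_right _ _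
      constructor <;> [linarith [h1.1]; linarith [h1.2]]
    refine (hasDerivAt_integral_of_dominated_loc_of_deriv_le (Metric.ball_mem_nhds s hε0)
      (Filter.Eventually.of_forall fun u => hFmeas (α u) (β u))
      (hFint s (hball (Metric.mem_ball_self hε0)))
      (hGmeas _ _ _ _)
      (Filter.Eventually.of_forall fun ω u hu => hGbd u (hball hu) ω)
      hbound1
      (Filter.Eventually.of_forall fun ω u hu => hptderiv u (hball hu) ω)).2
  have hGcont : ContinuousOn (fun u => ∫ ω, φ (α u • z ω + β u • x1 ω) ∂P) (Set.Icc 0 1) := by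
    intro s hs
    refine continuousWithinAt_of_dominated
      (Filter.Eventually.of_forall fun u => hFmeas (α u) (β u)) ?_ hbound0 ?_
    · filter_upwards [eventually_mem_nhdsWithin] with u hu
      exact Filter.Eventually.of_forall (hFbd u hu)
    · refine Filter.Eventually.of_forall fun ω => ?_
      have h1 : ContinuousWithinAt (fun u => α u • z ω + β u • x1 ω) (Set.Icc 0 1) s :=
        ((hαc s hs).smul continuousWithinAt_const).add ((hβc s hs).smul continuousWithinAt_const)
      exact hφ.continuous.continuousAt.comp_continuousWithinAt h1
  have hgcont : ContinuousOn (fun u => ∫ ω,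
      ⟪α' u • z ω + β' u • x1 ω, gradient φ (α u • z ω + β u • x1 ω)⟫ ∂P) (Set.Icc 0 1) := by
    intro s hs
    refine continuousWithinAt_of_dominated
      (Filter.Eventually.of_forall fun u => hGmeas _ _ _ _) ?_ hbound1 ?_
    · filter_upwards [eventually_mem_nhdsWithin] with u hu
      exact Filter.Eventually.of_forall (hGbd u hu)
    · refine Filter.Eventually.of_forall fun ω => ?_
      have h1 : ContinuousWithinAt (fun u => α' u • z ω + β' u • x1 ω) (Set.Icc 0 1) s :=
        ((hα'c s hs).smul continuousWithinAt_const).add ((hβ'c s hs).smul continuousWithinAt_const)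
      have h2 : ContinuousWithinAt (fun u => gradient φ (α u • z ω + β u • x1 ω))
          (Set.Icc 0 1) s := by
        refine hgc.continuousAt.comp_continuousWithinAt ?_
        exact ((hαc s hs).smul continuousWithinAt_const).add
          ((hβc s hs).smul continuousWithinAt_const)
      exact h1.inner h2
  constructor
  · intro t ht
    have hsub : Set.Icc (0:ℝ) t ⊆ Set.Icc 0 1 := Set.Icc_subset_Icc le_rfl ht.2
    have hkey := intervalIntegral.integral_eq_sub_of_hasDeriv_right_of_le ht.1
      (hGcont.mono hsub)
      (fun x hx => (hGderiv x ⟨hx.1, lt_of_lt_of_le hx.2 ht.2⟩).hasDerivWithinAt)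
      ((hgcont.mono (by rw [Set.uIcc_of_le ht.1]; exact hsub)).intervalIntegrable)
    linarith [hkey]
  · intro s hs
    have hIm : Measurable (fun ω => α s • z ω + β s • x1 ω) := hImeas _ _
    have hm : MeasurableSpace.comap (fun ω' => α s • z ω' + β s • x1 ω') inferInstance
        ≤ ‹MeasurableSpace Ω› := hIm.comap_le
    have hf2 : MemLp (fun ω => α' s • z ω + β' s • x1 ω) 2 P :=
      (hz2.const_smul (α' s)).add (hx12.const_smul (β' s))
    have hg2 : MemLp (fun ω => gradient φ (α s • z ω + β s • x1 ω)) 2 P :=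
      MemLp.of_bound ((hgc.measurable.comp hIm).aestronglyMeasurable) K
        (Filter.Eventually.of_forall fun ω => hgrad _)
    have hgm' : AEStronglyMeasurable[
        (MeasurableSpace.comap (fun ω' => α s • z ω' + β s • x1 ω') inferInstance)]
        (fun ω => gradient φ (α s • z ω + β s • x1 ω)) P := by
      refine StronglyMeasurable.aestronglyMeasurable ?_
      exact (hgc.measurable.comp (Measurable.of_comap_le le_rfl)).stronglyMeasurable
    exact aux_condexp_inner hm P hf2 hg2 hgm'
end
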